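/- arXiv:2510.21446 — 2 statements merged into one kernel-verified Lean document; each statement's English description precedes it below -/
import Mathlib

section
/- Let ρ, c, H_c be as above, with H_c(u) = ∫₀ᵘ dx/(c+ρ(x)) strictly increasing from [0,∞) onto [0,∞), with inverse H_c^{-1}. Then for every k₁ ≥ H_c(1) and k₂ > 0, one has H_c^{-1}(k₁ + k₂) ≤ 2·e^{k₂(ρ(1)+c)}·H_c^{-1}(k₁). -/
open MeasureTheory intervalIntegral Set

theorem Hc_inverse_growth (ρ : ℝ → ℝ) (c : ℝ)
    (hconc : ConcaveOn ℝ (Set.Ici 0) ρ)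
    (hcont : ContinuousOn ρ (Set.Ici 0))
    (h0 : ρ 0 = 0) (hpos : ∀ x : ℝ, 0 < x → 0 < ρ x)
    (hint : IntervalIntegrable (fun x => (ρ x)⁻¹) MeasureTheory.volume 0 1)
    (hc : 0 ≤ c)
    (Hc Hinv : ℝ → ℝ)
    (hHc : ∀ u : ℝ, Hc u = ∫ x in (0 : ℝ)..u, (c + ρ x)⁻¹)
    (hleft : ∀ u : ℝ, 0 ≤ u → Hinv (Hc u) = u)
    (hright : ∀ k : ℝ, 0 ≤ k → 0 ≤ Hinv k ∧ Hc (Hinv k) = k) :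
    ∀ k₁ k₂ : ℝ, Hc 1 ≤ k₁ → 0 < k₂ →
      Hinv (k₁ + k₂) ≤ 2 * Real.exp (k₂ * (ρ 1 + c)) * Hinv k₁ := by
  set f : ℝ → ℝ := fun x => (c + ρ x)⁻¹ with hf
  set M : ℝ := ρ 1 + c with hMdef
  have hρ1 : 0 < ρ 1 := hpos 1 one_pos
  have hM : 0 < M := by positivity
  -- pointwise positivity of c + ρ x for x > 0
  have hcρ : ∀ x : ℝ, 0 < x → 0 < c + ρ x := fun x hx => by
    have := hpos x hx; linarith
  -- concavity bound : for x ≥ 1, ρ x ≤ x * ρ 1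
  have hsub : ∀ x : ℝ, 1 ≤ x → ρ x ≤ x * ρ 1 := by
    intro x hx
    have hx0 : (0:ℝ) < x := by linarith
    have ha : (0:ℝ) ≤ 1 - 1/x := by
      have : 1/x ≤ 1 := by rw [div_le_one hx0]; exact hx
      linarith
    have hb : (0:ℝ) ≤ 1/x := by positivity
    have hab : (1 - 1/x) + 1/x = 1 := by ring
    have h := hconc.2 Set.self_mem_Ici (Set.mem_Ici.mpr (le_of_lt hx0)) ha hb hab
    simp only [smul_eq_mul, mul_zero, h0, zero_add] at h
    have hxx : (1/x) * x = 1 := by field_simp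
    rw [hxx] at h
    calc ρ x = x * ((1/x) * ρ x) := by field_simp
      _ ≤ x * ρ 1 := mul_le_mul_of_nonneg_left h (le_of_lt hx0)
  -- continuity of f away from 0
  have hfcont : ∀ a b : ℝ, 0 < a → ContinuousOn f (Set.uIcc a b) → True := fun _ _ _ _ => trivial
  have hfcontOn : ∀ s : Set ℝ, s ⊆ Set.Ioi 0 → ContinuousOn f s := by
    intro s hs
    apply ContinuousOn.inv₀
    · exact continuousOn_const.add (hcont.mono (fun x hx => Set.mem_Ici.mpr (le_of_lt (Set.mem_Ioi.mp (hs hx)))))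
    · intro x hx
      exact ne_of_gt (hcρ x (hs hx))
  -- integrability on [0, t] for all t ≥ 0
  have hint01 : IntervalIntegrable f volume 0 1 := by
    apply hint.mono_fun
    · apply ContinuousOn.aestronglyMeasurable
      · exact hfcontOn (Set.uIoc 0 1) (by
          rw [Set.uIoc_of_le (by norm_num : (0:ℝ) ≤ 1)]
          exact fun x hx => hx.1)
      · exact measurableSet_uIoc
    · filter_upwards [ae_restrict_mem measurableSet_uIoc] with x hx
      rw [Set.uIoc_of_le (by norm_num : (0:ℝ) ≤ 1)] at hx
      have hx0 : 0 < x := hx.1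
      have h1 : 0 < c + ρ x := hcρ x hx0
      have h2 : 0 < ρ x := hpos x hx0
      show |(c + ρ x)⁻¹| ≤ |(ρ x)⁻¹|
      rw [abs_inv, abs_inv, abs_of_pos h1, abs_of_pos h2]
      exact inv_anti₀ h2 (by linarith)
  have hint0t : ∀ t : ℝ, 0 ≤ t → IntervalIntegrable f volume 0 t := by
    intro t ht
    rcases le_or_gt t 1 with h | h
    · apply hint01.mono_set'
      rw [Set.uIoc_of_le ht, Set.uIoc_of_le (by norm_num : (0:ℝ) ≤ 1)]
      exact Set.Ioc_subset_Ioc le_rfl h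
    · refine hint01.trans ?_
      apply ContinuousOn.intervalIntegrable
      apply hfcontOn
      rw [Set.uIcc_of_le (le_of_lt h)]
      exact fun x hx => lt_of_lt_of_le one_pos hx.1
  -- strict monotonicity of Hc on [0, ∞)
  have hHcmono : ∀ a b : ℝ, 0 ≤ a → a < b → Hc a < Hc b := by
    intro a b ha hab
    have hb : 0 ≤ b := le_trans ha (le_of_lt hab)
    have hiab : IntervalIntegrable f volume a b :=
      (hint0t a ha).symm.trans (hint0t b hb)
    have hsub' : Hc b - Hc a = ∫ x in a..b, f x := by
      rw [hHc a, hHc b]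
      exact integral_interval_sub_left (hint0t b hb) (hint0t a ha)
    have hpos' : 0 < ∫ x in a..b, f x := by
      apply intervalIntegral_pos_of_pos_on hiab
      · intro x hx
        exact inv_pos.mpr (hcρ x (lt_of_le_of_lt ha hx.1))
      · exact hab
    linarith [hsub' ▸ hpos']
  have hHc0 : Hc 0 = 0 := by rw [hHc]; simp
  have hHc1pos : 0 < Hc 1 := hHc0 ▸ hHcmono 0 1 le_rfl one_pos
  intro k₁ k₂ hk₁ hk₂
  have hk₁0 : 0 ≤ k₁ := le_trans (le_of_lt hHc1pos) hk₁
  have hk₁₂ : 0 ≤ k₁ + k₂ := by linarith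
  obtain ⟨hu0, hu⟩ := hright k₁ hk₁0
  obtain ⟨hv0, hv⟩ := hright (k₁ + k₂) hk₁₂
  set u := Hinv k₁
  set v := Hinv (k₁ + k₂)
  have hu1 : 1 ≤ u := by
    by_contra h
    push_neg at h
    have := hHcmono u 1 hu0 h
    rw [hu] at this
    linarith
  have hexp : 1 ≤ Real.exp (k₂ * M) := by
    apply Real.one_le_exp
    positivity
  rcases le_or_gt v u with h | h
  · nlinarith
  · -- main case: u < v
    have hiuv : IntervalIntegrable f volume u v :=
      (hint0t u hu0).symm.trans (hint0t v hv0)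
    have hdiff : Hc v - Hc u = ∫ x in u..v, f x := by
      rw [hHc u, hHc v]
      exact integral_interval_sub_left (hint0t v hv0) (hint0t u hu0)
    have hglb : ∫ x in u..v, (M * (1 + x))⁻¹ ≤ ∫ x in u..v, f x := by
      apply intervalIntegral.integral_mono_on (le_of_lt h) _ hiuv
      · intro x hx
        have hx1 : 1 ≤ x := le_trans hu1 hx.1
        have hx0 : 0 < x := lt_of_lt_of_le one_pos hx1
        have hb : c + ρ x ≤ M * (1 + x) := by
          have h1 := hsub x hx1
          have : c ≤ c * (1 + x) := le_mul_of_one_le_right hc (by linarith)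
          nlinarith
        exact inv_anti₀ (hcρ x hx0) hb
      · apply ContinuousOn.intervalIntegrable
        apply ContinuousOn.inv₀
        · exact continuousOn_const.mul (continuousOn_const.add continuousOn_id)
        · intro x hx
          rw [Set.uIcc_of_le (le_of_lt h)] at hx
          have : 1 ≤ x := le_trans hu1 hx.1
          positivity
    have hcomp : ∫ x in u..v, (M * (1 + x))⁻¹
        = M⁻¹ * Real.log ((1 + v) / (1 + u)) := by
      have e1 : ∀ x : ℝ, (M * (1 + x))⁻¹ = M⁻¹ * (1 + x)⁻¹ := fun x => by
        rw [mul_inv]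
      simp_rw [e1]
      rw [intervalIntegral.integral_const_mul]
      congr 1
      have e2 : (∫ x in u..v, (1 + x)⁻¹) = ∫ x in (1+u)..(1+v), x⁻¹ :=
        intervalIntegral.integral_comp_add_left (fun x => x⁻¹) 1
      rw [e2, integral_inv]
      rw [Set.uIcc_of_le (by linarith : (1:ℝ)+u ≤ 1+v)]
      intro hmem
      have := hmem.1
      linarith
    have hlog : Real.log ((1 + v) / (1 + u)) ≤ k₂ * M := by
      have h1 : k₂ = Hc v - Hc u := by rw [hu, hv]; ring
      have h2 : M⁻¹ * Real.log ((1 + v) / (1 + u)) ≤ k₂ := by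
        rw [h1, hdiff]; rw [← hcomp]; exact hglb
      calc Real.log ((1 + v) / (1 + u)) = M * (M⁻¹ * Real.log ((1+v)/(1+u))) := by
            field_simp
        _ ≤ M * k₂ := by
            apply mul_le_mul_of_nonneg_left h2 (le_of_lt hM)
        _ = k₂ * M := mul_comm M k₂
    have hratio : (1 + v) / (1 + u) ≤ Real.exp (k₂ * M) := by
      rw [← Real.exp_log (by positivity : (0:ℝ) < (1 + v) / (1 + u))]
      exact Real.exp_le_exp.mpr hlog
    have : 1 + v ≤ (1 + u) * Real.exp (k₂ * M) := by
      rw [div_le_iff₀ (by positivity : (0:ℝ) < 1 + u)] at hratio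
      linarith [hratio]
    nlinarith [Real.exp_pos (k₂ * M)]
end

section
/- Let ρ, c, H_c, H_c^{-1} be as above and set ρ_c(x) := ρ(x) + c. Then for every k₁ ≥ H_c(1), k₂ > 0 and k₃ > 0: ρ_c(k₃·H_c^{-1}(k₁ + k₂)) ≤ 2·e^{k₂(ρ(1)+c)}·ρ_c(k₃·H_c^{-1}(k₁)). -/
open Set MeasureTheory intervalIntegral

theorem rho_c_of_Hc_inverse_growth (ρ : ℝ → ℝ) (c : ℝ)
    (hconc : ConcaveOn ℝ (Set.Ici 0) ρ)
    (hcont : ContinuousOn ρ (Set.Ici 0))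
    (h0 : ρ 0 = 0) (hpos : ∀ x : ℝ, 0 < x → 0 < ρ x)
    (hint : IntervalIntegrable (fun x => (ρ x)⁻¹) MeasureTheory.volume 0 1)
    (hc : 0 ≤ c)
    (Hc Hinv : ℝ → ℝ)
    (hHc : ∀ u : ℝ, Hc u = ∫ x in (0 : ℝ)..u, (c + ρ x)⁻¹)
    (hleft : ∀ u : ℝ, 0 ≤ u → Hinv (Hc u) = u)
    (hright : ∀ k : ℝ, 0 ≤ k → 0 ≤ Hinv k ∧ Hc (Hinv k) = k) :
    ∀ k₁ k₂ k₃ : ℝ, Hc 1 ≤ k₁ → 0 < k₂ → 0 < k₃ →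
      ρ (k₃ * Hinv (k₁ + k₂)) + c ≤
        2 * Real.exp (k₂ * (ρ 1 + c)) * (ρ (k₃ * Hinv k₁) + c) := by
  intro k₁ k₂ k₃ hk₁ hk₂ hk₃
  set g : ℝ → ℝ := fun x => (c + ρ x)⁻¹ with hgdef
  have hgpos : ∀ x : ℝ, 0 < x → 0 < c + ρ x := fun x hx =>
    add_pos_of_nonneg_of_pos hc (hpos x hx)
  -- subhomogeneity
  have hsub : ∀ u C : ℝ, 0 ≤ u → 1 ≤ C → ρ (C * u) ≤ C * ρ u := by
    intro u C hu hC
    have hC0 : 0 < C := lt_of_lt_of_le one_pos hC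
    have hmem : C * u ∈ Set.Ici (0:ℝ) := by
      have : 0 ≤ C * u := mul_nonneg hC0.le hu
      simpa using this
    have ha : (0:ℝ) ≤ 1 - 1/C := by
      have : 1/C ≤ 1 := by rw [div_le_one hC0]; exact hC
      linarith
    have hb : (0:ℝ) ≤ 1/C := by positivity
    have hab : (1 - 1/C) + 1/C = (1:ℝ) := by ring
    have h1 := hconc.2 (Set.self_mem_Ici (a := (0:ℝ))) hmem ha hb hab
    simp only [smul_eq_mul, mul_zero, h0, zero_add] at h1
    have h2 : (1/C) * (C * u) = u := by field_simp
    rw [h2] at h1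
    have := mul_le_mul_of_nonneg_left h1 hC0.le
    calc ρ (C * u) = C * ((1/C) * ρ (C * u)) := by field_simp
      _ ≤ C * ρ u := this
  -- continuity of g on (0,∞)
  have hcontg : ContinuousOn g (Set.Ioi 0) := by
    apply (continuousOn_const.add (hcont.mono Set.Ioi_subset_Ici_self)).inv₀
    exact fun x hx => (hgpos x hx).ne'
  -- integrability on [0,1]
  have hInt01 : IntervalIntegrable g volume 0 1 := by
    rw [intervalIntegrable_iff_integrableOn_Ioc_of_le zero_le_one]
    have hmeas : AEStronglyMeasurable g (volume.restrict (Set.Ioc 0 1)) :=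
      (hcontg.mono Set.Ioc_subset_Ioi_self).aestronglyMeasurable measurableSet_Ioc
    have hbase : IntegrableOn (fun x => (ρ x)⁻¹) (Set.Ioc 0 1) volume :=
      (intervalIntegrable_iff_integrableOn_Ioc_of_le zero_le_one).mp hint
    refine MeasureTheory.Integrable.mono hbase hmeas ?_
    refine (ae_restrict_iff' measurableSet_Ioc).mpr (Filter.Eventually.of_forall ?_)
    intro x hx
    have hρ : 0 < ρ x := hpos x hx.1
    have h1 : (c + ρ x)⁻¹ ≤ (ρ x)⁻¹ := by
      apply inv_anti₀ hρ; linarith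
    rw [Real.norm_eq_abs, Real.norm_eq_abs, abs_of_pos (inv_pos.mpr (hgpos x hx.1)),
      abs_of_pos (inv_pos.mpr hρ)]
    exact h1
  -- integrability on [0,T]
  have hIntT : ∀ T : ℝ, 0 ≤ T → IntervalIntegrable g volume 0 T := by
    intro T hT
    rcases le_or_gt T 1 with h | h
    · refine hInt01.mono_set ?_
      rw [Set.uIcc_of_le hT, Set.uIcc_of_le zero_le_one]
      exact Set.Icc_subset_Icc le_rfl h
    · refine hInt01.trans (b := 1) ?_
      apply ContinuousOn.intervalIntegrable
      refine hcontg.mono ?_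
      rw [Set.uIcc_of_le h.le]
      intro x hx
      exact lt_of_lt_of_le one_pos hx.1
  have hIntab : ∀ a b : ℝ, 0 ≤ a → a ≤ b → IntervalIntegrable g volume a b := by
    intro a b ha hab
    refine (hIntT b (ha.trans hab)).mono_set ?_
    rw [Set.uIcc_of_le hab, Set.uIcc_of_le (ha.trans hab)]
    exact Set.Icc_subset_Icc ha le_rfl
  have hHdiff : ∀ a b : ℝ, 0 ≤ a → a ≤ b → Hc b - Hc a = ∫ x in a..b, g x := by
    intro a b ha hab
    rw [hHc, hHc]
    have := integral_add_adjacent_intervals (hIntT a ha) (hIntab a b ha hab)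
    simp only [hgdef] at this ⊢
    linarith
  have hmono : ∀ a b : ℝ, 0 ≤ a → a < b → Hc a < Hc b := by
    intro a b ha hab
    have hpos' : 0 < ∫ x in a..b, g x := by
      apply intervalIntegral_pos_of_pos_on (hIntab a b ha hab.le) _ hab
      intro x hx
      exact inv_pos.mpr (hgpos x (lt_of_le_of_lt ha hx.1))
    have := hHdiff a b ha hab.le
    linarith
  have hHc1nonneg : 0 ≤ Hc 1 := by
    rw [hHc]
    apply intervalIntegral.integral_nonneg zero_le_one
    intro x hx
    rcases eq_or_lt_of_le hx.1 with h | h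
    · rw [← h, h0]; simp [hc]
    · exact (inv_pos.mpr (hgpos x h)).le
  have hk₁0 : 0 ≤ k₁ := hHc1nonneg.trans hk₁
  obtain ⟨hu₁0, hHu₁⟩ := hright k₁ hk₁0
  obtain ⟨hu₂0, hHu₂⟩ := hright (k₁ + k₂) (by linarith)
  set u₁ := Hinv k₁
  set u₂ := Hinv (k₁ + k₂)
  have hu₁1 : 1 ≤ u₁ := by
    by_contra h
    push_neg at h
    have := hmono u₁ 1 hu₁0 h
    rw [hHu₁] at this
    linarith
  have hu₁₂ : u₁ < u₂ := by
    by_contra h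
    push_neg at h
    rcases h.lt_or_eq with h' | h'
    · have := hmono u₂ u₁ hu₂0 h'
      rw [hHu₁, hHu₂] at this
      linarith
    · rw [h', hHu₁] at hHu₂
      linarith
  have hρc1 : 0 < ρ 1 + c := add_pos_of_pos_of_nonneg (hpos 1 one_pos) hc
  have hu₁pos : 0 < u₁ := lt_of_lt_of_le one_pos hu₁1
  -- key log estimate
  have key : Real.log (u₂ / u₁) ≤ k₂ * (ρ 1 + c) := by
    have hint2 : (∫ x in u₁..u₂, g x) = k₂ := by
      have := hHdiff u₁ u₂ hu₁0 hu₁₂.le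
      rw [hHu₁, hHu₂] at this
      linarith
    have hIntlow : IntervalIntegrable (fun x => (ρ 1 + c)⁻¹ * x⁻¹) volume u₁ u₂ := by
      apply ContinuousOn.intervalIntegrable
      apply continuousOn_const.mul
      apply ContinuousOn.inv₀ continuousOn_id
      intro x hx
      rw [Set.uIcc_of_le hu₁₂.le] at hx
      exact (lt_of_lt_of_le hu₁pos hx.1).ne'
    have hlow : (∫ x in u₁..u₂, (ρ 1 + c)⁻¹ * x⁻¹) ≤ ∫ x in u₁..u₂, g x := by
      apply integral_mono_on hu₁₂.le hIntlow (hIntab u₁ u₂ hu₁0 hu₁₂.le)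
      intro x hx
      have hx1 : 1 ≤ x := hu₁1.trans hx.1
      have hx0 : 0 < x := lt_of_lt_of_le one_pos hx1
      have hb : c + ρ x ≤ (ρ 1 + c) * x := by
        have h1 := hsub 1 x zero_le_one hx1
        rw [mul_one] at h1
        nlinarith [mul_le_mul_of_nonneg_left hx1 hc]
      calc (ρ 1 + c)⁻¹ * x⁻¹ = ((ρ 1 + c) * x)⁻¹ := (mul_inv _ _).symm
        _ ≤ (c + ρ x)⁻¹ := inv_anti₀ (hgpos x hx0) hb
    have hcomp : (∫ x in u₁..u₂, (ρ 1 + c)⁻¹ * x⁻¹) = (ρ 1 + c)⁻¹ * Real.log (u₂ / u₁) := by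
      rw [intervalIntegral.integral_const_mul, integral_inv_of_pos hu₁pos (hu₁pos.trans hu₁₂)]
    rw [hcomp, hint2] at hlow
    have := mul_le_mul_of_nonneg_left hlow hρc1.le
    rw [← mul_assoc, mul_inv_cancel₀ hρc1.ne', one_mul] at this
    linarith
  have hC : u₂ / u₁ ≤ Real.exp (k₂ * (ρ 1 + c)) := by
    rw [← Real.log_le_iff_le_exp (div_pos (hu₁pos.trans hu₁₂) hu₁pos)]
    exact key
  have hCge1 : 1 ≤ u₂ / u₁ := (one_le_div hu₁pos).mpr hu₁₂.le
  have heq : k₃ * u₂ = (u₂ / u₁) * (k₃ * u₁) := by field_simp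
  have hmain : ρ (k₃ * u₂) + c ≤ (u₂ / u₁) * (ρ (k₃ * u₁) + c) := by
    have h1 := hsub (k₃ * u₁) (u₂ / u₁) (by positivity) hCge1
    rw [← heq] at h1
    nlinarith
  have hρpos : 0 < ρ (k₃ * u₁) + c :=
    add_pos_of_pos_of_nonneg (hpos _ (by positivity)) hc
  have hexp : 0 < Real.exp (k₂ * (ρ 1 + c)) := Real.exp_pos _
  calc ρ (k₃ * u₂) + c ≤ (u₂ / u₁) * (ρ (k₃ * u₁) + c) := hmain
    _ ≤ Real.exp (k₂ * (ρ 1 + c)) * (ρ (k₃ * u₁) + c) :=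
        mul_le_mul_of_nonneg_right hC hρpos.le
    _ ≤ 2 * Real.exp (k₂ * (ρ 1 + c)) * (ρ (k₃ * u₁) + c) := by nlinarith
end
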